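/- Let G be a Hausdorff topological group and let Γ be a connected simple G-graph with discrete action and compact pointwise edge stabilizers. Let u be a vertex of Γ and let H ≤ G be a compact open subgroup. Let Δ be the simple graph with vertex set V(Γ) ⊔ G/H (the disjoint union with the set of left cosets of H) and edge set E(Γ) ∪ { {g·u, gH} : g ∈ G }, with G acting on V(Γ) as before and on G/H by left translation. Then for every vertex a of Γ, Γ is fine at a if and only if Δ is fine at a; moreover, there is a constant ℓ ≥ 1 such that d_Δ(x,y) ≤ d_Γ(x,y) ≤ ℓ·d_Δ(x,y) for all vertices x, y of Γ, and every vertex of Δ is at distance at most 1 from a vertex of Γ. -/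

import Mathlib

open MulAction

universe u v

/-- A topological group is compactly generated if it has a compact subset that
generates it algebraically. -/
def IsCompactlyGeneratedGroup (G : Type*) [Group G] [TopologicalSpace G] : Prop :=
  ∃ S : Set G, IsCompact S ∧ Subgroup.closure S = ⊤

/-- A topological group `G` is compactly presented if there are a compact generating set `S`
and `n : ℕ` such that the kernel of the canonical map `FreeGroup S →* G` is generated as a
normal subgroup by its elements of word length at most `n`. -/
def IsCompactlyPresentedGroup (G : Type*) [Group G] [TopologicalSpace G] : Prop :=
  ∃ (S : Set G) (n : ℕ), IsCompact S ∧ Subgroup.closure S = ⊤ ∧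
    Subgroup.normalClosure
      {x : FreeGroup S |
        x ∈ (FreeGroup.lift (fun s : S => (s : G))).ker ∧
          ∃ l : List (S × Bool), FreeGroup.mk l = x ∧ l.length ≤ n} =
      (FreeGroup.lift (fun s : S => (s : G))).ker

/-- A topological group is coherent if every closed compactly generated subgroup
(with the subspace topology) is compactly presented. -/
def IsCoherentGroup (G : Type*) [Group G] [TopologicalSpace G] : Prop :=
  ∀ Q : Subgroup G, IsClosed (Q : Set G) → IsCompactlyGeneratedGroup Q →
    IsCompactlyPresentedGroup Q

section Amalgam

variable {G : Type u} [Group G]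

/-- The two-element family of groups `A`, `B`. -/
def amalgamFamily (A B : Subgroup G) : Bool → Type u := fun b => match b with
  | true => A
  | false => B

instance (A B : Subgroup G) : (b : Bool) → Group (amalgamFamily A B b)
  | true => inferInstanceAs (Group A)
  | false => inferInstanceAs (Group B)

/-- The inclusions of `C = A ⊓ B` into `A` and `B`. -/
def amalgamMaps (A B : Subgroup G) : (b : Bool) → (↥(A ⊓ B) →* amalgamFamily A B b)
  | true => Subgroup.inclusion inf_le_left
  | false => Subgroup.inclusion inf_le_right

/-- The inclusions of `A` and `B` into `G`. -/
def amalgamProj (A B : Subgroup G) : (b : Bool) → (amalgamFamily A B b →* G)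
  | true => A.subtype
  | false => B.subtype

/-- The canonical homomorphism from the pushout (in the category of groups) of the
inclusions `A ⊓ B ↪ A` and `A ⊓ B ↪ B` to `G`. -/
def amalgamCanonicalHom (A B : Subgroup G) : Monoid.PushoutI (amalgamMaps A B) →* G :=
  Monoid.PushoutI.lift (amalgamProj A B) (A ⊓ B).subtype
    (by rintro (_ | _) <;> exact MonoidHom.ext fun x => rfl)

/-- `G` splits as the amalgamated free product `A ∗_(A ⊓ B) B` if the canonical homomorphism
from the pushout of the inclusions to `G` is bijective. -/
def IsAmalgamatedProduct (A B : Subgroup G) : Prop :=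
  Function.Bijective (amalgamCanonicalHom A B)

end Amalgam

section Graphs

variable {V : Type v}

/-- The graph obtained from `Γ` by deleting the vertex `v` (making it isolated). -/
def SimpleGraph.deleteVertex (Γ : SimpleGraph V) (v : V) : SimpleGraph V where
  Adj a b := Γ.Adj a b ∧ a ≠ v ∧ b ≠ v
  symm := ⟨fun a b h => ⟨h.1.symm, h.2.2, h.2.1⟩⟩
  loopless := ⟨fun a h => Γ.irrefl h.1⟩

/-- `Γ` is fine at `v` if for every neighbour `x` of `v` and every `n`, there are only
finitely many neighbours of `v` joined to `x` by a path of length at most `n` avoiding `v`;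
i.e. balls of the angle metric on the neighbours of `v` are finite. -/
def SimpleGraph.FineAt (Γ : SimpleGraph V) (v : V) : Prop :=
  ∀ x ∈ Γ.neighborSet v, ∀ n : ℕ,
    {y | y ∈ Γ.neighborSet v ∧ ∃ p : (Γ.deleteVertex v).Walk x y, p.length ≤ n}.Finite

/-- A graph is fine if it is fine at every vertex. -/
def SimpleGraph.Fine (Γ : SimpleGraph V) : Prop := ∀ v : V, Γ.FineAt v

/-- A connected graph is hyperbolic if its path metric satisfies the four point condition
up to an additive constant. -/
def SimpleGraph.IsHyperbolic (Γ : SimpleGraph V) : Prop :=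
  ∃ δ : ℝ, 0 ≤ δ ∧ ∀ x y z w : V,
    (Γ.dist x y + Γ.dist z w : ℝ) ≤
      max ((Γ.dist x z + Γ.dist y w : ℝ)) ((Γ.dist x w + Γ.dist y z : ℝ)) + δ

/-- Two graphs (with their path metrics) are quasi-isometric. -/
def QuasiIsometricGraphs {V₁ : Type*} {V₂ : Type*}
    (Γ₁ : SimpleGraph V₁) (Γ₂ : SimpleGraph V₂) : Prop :=
  ∃ (f : V₁ → V₂) (L C : ℝ), 1 ≤ L ∧ 0 ≤ C ∧
    (∀ x y : V₁,
      L⁻¹ * (Γ₁.dist x y : ℝ) - C ≤ (Γ₂.dist (f x) (f y) : ℝ) ∧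
      (Γ₂.dist (f x) (f y) : ℝ) ≤ L * (Γ₁.dist x y : ℝ) + C) ∧
    ∀ z : V₂, ∃ x : V₁, (Γ₂.dist z (f x) : ℝ) ≤ C

end Graphs

section GGraphs

variable (G : Type u) [Group G] [TopologicalSpace G] {V : Type v} [MulAction G V]

/-- The action of `G` on the vertices of `Γ` is by graph automorphisms. -/
def IsGraphAction (Γ : SimpleGraph V) : Prop :=
  ∀ (g : G) (a b : V), Γ.Adj a b → Γ.Adj (g • a) (g • b)

/-- The action is discrete: all vertex stabilizers are open. -/
def IsDiscreteAction (Γ : SimpleGraph V) : Prop :=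
  ∀ v : V, IsOpen ((stabilizer G v : Subgroup G) : Set G)

/-- The action is cocompact: finitely many orbits of vertices and of edges. -/
def IsCocompactAction (Γ : SimpleGraph V) : Prop :=
  (∃ s : Set V, s.Finite ∧ ∀ v : V, ∃ g : G, g • v ∈ s) ∧
  (∃ t : Set (V × V), t.Finite ∧ ∀ a b : V, Γ.Adj a b → ∃ g : G, (g • a, g • b) ∈ t)

/-- Pointwise edge stabilizers are compact. -/
def HasCompactEdgeStabilizers (Γ : SimpleGraph V) : Prop :=
  ∀ a b : V, Γ.Adj a b →
    IsCompact ((stabilizer G a ⊓ stabilizer G b : Subgroup G) : Set G)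

/-- The conjugate `g H g⁻¹` of a subgroup. -/
def conjSubgroup {G : Type u} [Group G] (g : G) (H : Subgroup G) : Subgroup G :=
  Subgroup.map (MulAut.conj g).toMonoidHom H

/-- A proper pair: `G` has a compact open subgroup, `ℋ` is a finite collection of open
subgroups, and no two distinct non-compact members of `ℋ` are conjugate. -/
def IsProperPair (G : Type u) [Group G] [TopologicalSpace G]
    (ℋ : Finset (Subgroup G)) : Prop :=
  (∃ U : Subgroup G, IsCompact (U : Set G) ∧ IsOpen (U : Set G)) ∧
  (∀ H ∈ ℋ, IsOpen ((H : Subgroup G) : Set G)) ∧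
  (∀ H ∈ ℋ, ∀ K ∈ ℋ, ¬ IsCompact ((H : Subgroup G) : Set G) →
    ¬ IsCompact ((K : Subgroup G) : Set G) →
    (∃ g : G, conjSubgroup g H = K) → H = K)

/-- `Γ` is a Cayley-Abels graph of `G` with respect to `ℋ`. -/
def IsCayleyAbelsGraph (ℋ : Finset (Subgroup G)) (Γ : SimpleGraph V) : Prop :=
  IsGraphAction G Γ ∧
  Γ.Connected ∧
  IsDiscreteAction G Γ ∧
  IsCocompactAction G Γ ∧
  HasCompactEdgeStabilizers G Γ ∧
  (∀ v : V, IsCompact ((stabilizer G v : Subgroup G) : Set G) ∨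
    ∃ H ∈ ℋ, ∃ g : G, stabilizer G v = conjSubgroup g H) ∧
  (∀ H ∈ ℋ, ∃ v : V, stabilizer G v = H) ∧
  (∀ H ∈ ℋ, ¬ IsCompact ((H : Subgroup G) : Set G) →
    ∀ u v : V, stabilizer G u = H → stabilizer G v = H → ∃ g : G, g • u = v)

end GGraphs

/-- The graph obtained from `Γ` by attaching a `G`-orbit of cone edges with representative
`{u, H}`: the new vertices are the left cosets `G/H` and `g•u` is joined to `gH`. -/
def attachConeEdges (G : Type u) [Group G] {V : Type v} [MulAction G V]
    (Γ : SimpleGraph V) (u : V) (H : Subgroup G) : SimpleGraph (V ⊕ (G ⧸ H)) where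
  Adj a b :=
    (∃ x y : V, Γ.Adj x y ∧ a = Sum.inl x ∧ b = Sum.inl y) ∨
    (∃ g : G, (a = Sum.inl (g • u) ∧ b = Sum.inr (g : G ⧸ H)) ∨
              (b = Sum.inl (g • u) ∧ a = Sum.inr (g : G ⧸ H)))
  symm := by
    refine ⟨?_⟩
    rintro a b (⟨x, y, hxy, ha, hb⟩ | ⟨g, h⟩)
    · exact Or.inl ⟨y, x, hxy.symm, hb, ha⟩
    · exact Or.inr ⟨g, h.symm⟩
  loopless := by
    refine ⟨?_⟩
    rintro a (⟨x, y, hxy, ha, hb⟩ | ⟨g, (⟨h1, h2⟩ | ⟨h1, h2⟩)⟩)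
    · obtain rfl : x = y := Sum.inl.inj (ha.symm.trans hb)
      exact Γ.irrefl hxy
    · exact Sum.inl_ne_inr (h1.symm.trans h2)
    · exact Sum.inl_ne_inr (h1.symm.trans h2)


/-!
Since `H` is compact and vertex stabilizers are open, the set `H • u` is finite, so walks of length
at most `M` from `u` to every `h • u` can be chosen inside one finite set `K`. Translating them
replaces each passage `g • u — gH — gh • u` through a cone vertex by a walk of `Γ` of length at
most `M`; this gives the distance bounds. Near a vertex `a` such a translated walk may pass through
`a`, and is then rerouted along one shortcut between two neighbours of `a` that lie, with `a`, in a
common translate `g • K`. As edge stabilizers are compact, only finitely many translates of `K`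
contain a given edge at `a`; so each neighbour of `a` has finitely many shortcuts, and only finitely
many cone vertices at `a` are reached through it. Finally, adding a locally finite set of edges
between neighbours of `a` preserves fineness at `a`.
-/

open SimpleGraph Pointwise

section CompactSets

variable {G : Type u} [Group G] [TopologicalSpace G] [IsTopologicalGroup G]

theorem IsCompact.finite_image_mk {H : Subgroup G} (hH : IsOpen (H : Set G)) {C : Set G}
    (hC : IsCompact C) : ((QuotientGroup.mk : G → G ⧸ H) '' C).Finite :=
  haveI := QuotientGroup.discreteTopology hH
  (hC.image QuotientGroup.continuous_mk).finite_of_discrete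

variable {V : Type v} [MulAction G V]

theorem IsCompact.finite_image_smul {x : V} (hx : IsOpen (stabilizer G x : Set G)) {C : Set G}
    (hC : IsCompact C) : ((fun g : G => g • x) '' C).Finite := by
  have := (hC.finite_image_mk hx).image (ofQuotientStabilizer G x)
  rwa [Set.image_image] at this

theorem isCompact_setOf_smul_eq_and_smul_eq {x y : V}
    (hxy : IsCompact ((stabilizer G x ⊓ stabilizer G y : Subgroup G) : Set G)) (b c : V) :
    IsCompact {g : G | g • x = b ∧ g • y = c} := by
  rcases Set.eq_empty_or_nonempty {g : G | g • x = b ∧ g • y = c} with h | ⟨g₀, hg₀x, hg₀y⟩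
  · simp [h]
  convert hxy.smul g₀ using 1
  ext g
  simp [Set.mem_smul_set_iff_inv_smul_mem, mul_smul, inv_smul_eq_iff, hg₀x, hg₀y]

theorem isCompact_setOf_mem_smul_and_mem_smul {Γ : SimpleGraph V}
    (hedge : HasCompactEdgeStabilizers G Γ) {K : Set V} (hK : K.Finite) {x y : V}
    (hxy : Γ.Adj x y) : IsCompact {g : G | x ∈ g • K ∧ y ∈ g • K} := by
  have hunion : {g : G | x ∈ g • K ∧ y ∈ g • K} =
      (⋃ b ∈ K, ⋃ c ∈ K, {g : G | g • x = b ∧ g • y = c})⁻¹ := by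
    ext g
    simp [Set.mem_smul_set_iff_inv_smul_mem]
  rw [hunion]
  exact (hK.isCompact_biUnion fun b _ => hK.isCompact_biUnion fun c _ =>
    isCompact_setOf_smul_eq_and_smul_eq (hedge x y hxy) b c).inv

end CompactSets

namespace SimpleGraph

variable {V : Type v}

def angleBall (Γ : SimpleGraph V) (v x : V) (n : ℕ) : Set V :=
  {y | y ∈ Γ.neighborSet v ∧ ∃ p : (Γ.deleteVertex v).Walk x y, p.length ≤ n}

@[simp]
theorem deleteVertex_adj {Γ : SimpleGraph V} {v x y : V} :
    (Γ.deleteVertex v).Adj x y ↔ Γ.Adj x y ∧ x ≠ v ∧ y ≠ v :=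
  Iff.rfl

theorem deleteVertex_mono {Γ Γ' : SimpleGraph V} (h : Γ ≤ Γ') (v : V) :
    Γ.deleteVertex v ≤ Γ'.deleteVertex v :=
  fun _ _ hxy => ⟨h hxy.1, hxy.2⟩

theorem FineAt.angleBall_finite {Γ : SimpleGraph V} {v : V} (h : Γ.FineAt v) (x : V) (n : ℕ) :
    (Γ.angleBall v x n).Finite := by
  rcases (Γ.angleBall v x n).eq_empty_or_nonempty with he | ⟨y, hy, p, hp⟩
  · simp [he]
  refine (h y hy (2 * n)).subset ?_
  rintro z ⟨hz, q, hq⟩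
  exact ⟨hz, p.reverse.append q, by rw [Walk.length_append, Walk.length_reverse]; omega⟩

theorem Hom.fineAt_of_injective {V' : Type*} {Γ : SimpleGraph V} {Γ' : SimpleGraph V'}
    (f : Γ →g Γ') (hf : Function.Injective f) {v : V} (h : Γ'.FineAt (f v)) : Γ.FineAt v := by
  intro x hx n
  let f' : Γ.deleteVertex v →g Γ'.deleteVertex (f v) :=
    ⟨f, fun hxy => ⟨f.map_adj hxy.1, hf.ne hxy.2.1, hf.ne hxy.2.2⟩⟩
  refine ((h (f x) (f.map_adj hx) n).preimage hf.injOn).subset ?_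
  rintro y ⟨hy, p, hp⟩
  exact ⟨f.map_adj hy, p.map f', by rwa [Walk.length_map]⟩

theorem Connected.exists_walks_bounded {Γ : SimpleGraph V} (hconn : Γ.Connected) (u : V)
    {F : Set V} (hF : F.Finite) : ∃ (M : ℕ) (K : Set V), K.Finite ∧
      ∀ y ∈ F, ∃ p : Γ.Walk u y, p.length ≤ M ∧ ∀ v ∈ p.support, v ∈ K := by
  let P : ∀ y, Γ.Walk u y := fun y => (hconn.preconnected u y).some
  obtain ⟨M, hM⟩ := (hF.image fun y => (P y).length).bddAbove
  exact ⟨M, ⋃ y ∈ F, {v | v ∈ (P y).support}, hF.biUnion fun y _ => (P y).support.finite_toSet,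
    fun y hy => ⟨P y, hM ⟨y, hy, rfl⟩, fun v hv => Set.mem_biUnion hy hv⟩⟩

namespace Walk

theorem exists_deleteVertex_of_notMem_support {Γ : SimpleGraph V} {a : V} :
    ∀ {x y : V} (p : Γ.Walk x y), a ∉ p.support →
      ∃ q : (Γ.deleteVertex a).Walk x y, q.length = p.length
  | _, _, nil, _ => ⟨nil, rfl⟩
  | _, _, cons h p, ha => by
    simp only [support_cons, List.mem_cons, not_or] at ha
    obtain ⟨q, hq⟩ := exists_deleteVertex_of_notMem_support p ha.2
    have hadj : (Γ.deleteVertex a).Adj _ _ :=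
      ⟨h, Ne.symm ha.1, fun hz => ha.2 (hz ▸ p.start_mem_support)⟩
    exact ⟨cons hadj q, by rw [length_cons, length_cons, hq]⟩

theorem exists_adj_of_mem_support {Γ : SimpleGraph V} {a : V} :
    ∀ {x y : V} (p : Γ.Walk x y), x ≠ a → a ∈ p.support →
      ∃ w ∈ p.support, Γ.Adj w a ∧ ∃ q : (Γ.deleteVertex a).Walk x w, q.length < p.length
  | _, _, nil, hx, ha => absurd (by simpa using ha) (Ne.symm hx)
  | x, _, cons (v := z) h p, hx, ha => by
    by_cases hz : z = a
    · subst hz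
      exact ⟨x, (cons h p).start_mem_support, h, nil, by simp⟩
    obtain ⟨w, hw, hwa, q, hq⟩ := exists_adj_of_mem_support p hz
      ((List.mem_cons.1 (support_cons h p ▸ ha)).resolve_left (Ne.symm hx))
    exact ⟨w, by simp [hw], hwa, cons (deleteVertex_adj.2 ⟨h, hx, hz⟩) q,
      by rw [length_cons, length_cons]; omega⟩

theorem exists_walk_sup_deleteVertex {Γ J : SimpleGraph V} {a x y : V} (p : Γ.Walk x y)
    (hx : x ≠ a) (hy : y ≠ a)
    (hJ : a ∈ p.support → ∀ w₁ ∈ p.support, ∀ w₂ ∈ p.support,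
      Γ.Adj w₁ a → Γ.Adj w₂ a → w₁ ≠ w₂ → J.Adj w₁ w₂) :
    ∃ q : ((Γ ⊔ J).deleteVertex a).Walk x y, q.length ≤ 2 * p.length := by
  have hle := deleteVertex_mono (le_sup_left : Γ ≤ Γ ⊔ J) a
  by_cases ha : a ∈ p.support
  · obtain ⟨w₁, hw₁, hw₁a, q₁, hq₁⟩ := p.exists_adj_of_mem_support hx ha
    obtain ⟨w₂, hw₂, hw₂a, q₂, hq₂⟩ := p.reverse.exists_adj_of_mem_support hy (by simpa using ha)
    rw [support_reverse, List.mem_reverse] at hw₂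
    rw [length_reverse] at hq₂
    by_cases hw : w₁ = w₂
    · subst hw
      exact ⟨(q₁.mapLe hle).append (q₂.reverse.mapLe hle), by
        simp only [length_append, length_mapLe, length_reverse]; omega⟩
    · have hjump : ((Γ ⊔ J).deleteVertex a).Adj w₁ w₂ :=
        ⟨Or.inr (hJ ha w₁ hw₁ w₂ hw₂ hw₁a hw₂a hw), hw₁a.ne, hw₂a.ne⟩
      exact ⟨(q₁.mapLe hle).append (cons hjump (q₂.reverse.mapLe hle)), by
        simp only [length_append, length_cons, length_mapLe, length_reverse]; omega⟩
  · obtain ⟨q, hq⟩ := p.exists_deleteVertex_of_notMem_support ha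
    exact ⟨q.mapLe hle, by rw [length_mapLe]; omega⟩

theorem split_deleteVertex_sup {Γ J : SimpleGraph V} {a : V} :
    ∀ {x y : V} (p : ((Γ ⊔ J).deleteVertex a).Walk x y),
      (∃ q : (Γ.deleteVertex a).Walk x y, q.length ≤ p.length) ∨
      ∃ w w', J.Adj w w' ∧ (∃ q : (Γ.deleteVertex a).Walk x w, q.length ≤ p.length) ∧
        ∃ r : ((Γ ⊔ J).deleteVertex a).Walk w' y, r.length < p.length
  | _, _, nil => Or.inl ⟨nil, le_rfl⟩
  | _, _, cons h p => by
    obtain ⟨hΓ | hJ, hx, hz⟩ := deleteVertex_adj.1 h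
    · have hΓ' : (Γ.deleteVertex a).Adj _ _ := ⟨hΓ, hx, hz⟩
      rcases split_deleteVertex_sup p with ⟨q, hq⟩ | ⟨w, w', hww', ⟨q, hq⟩, r, hr⟩
      · exact Or.inl ⟨cons hΓ' q, by rw [length_cons, length_cons]; omega⟩
      · exact Or.inr ⟨w, w', hww', ⟨cons hΓ' q, by rw [length_cons, length_cons]; omega⟩, r,
          by rw [length_cons]; omega⟩
    · exact Or.inr ⟨_, _, hJ, ⟨nil, by simp⟩, p, by simp⟩

end Walk

theorem FineAt.angleBall_sup_finite {Γ J : SimpleGraph V} {a : V} (hfine : Γ.FineAt a)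
    (hJ : ∀ w w', J.Adj w w' → Γ.Adj a w) (hJfin : ∀ w, (J.neighborSet w).Finite) (s : V)
    (n : ℕ) : ((Γ ⊔ J).angleBall a s n).Finite := by
  have hnbr : ∀ {q}, (Γ ⊔ J).Adj a q → Γ.Adj a q :=
    fun h => h.resolve_right fun hJq => (hJ a _ hJq).ne rfl
  induction n generalizing s with
  | zero =>
    refine (Set.finite_singleton s).subset ?_
    rintro q ⟨-, p, hp⟩
    exact (Walk.eq_of_length_eq_zero (Nat.le_zero.1 hp)).symm
  | succ n ih =>
    have hΓ := hfine.angleBall_finite s (n + 1)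
    refine (hΓ.union (hΓ.biUnion fun w _ => (hJfin w).biUnion fun w' _ => ih w')).subset ?_
    rintro q ⟨hq, p, hp⟩
    rcases p.split_deleteVertex_sup with ⟨r, hr⟩ | ⟨w, w', hww', ⟨r, hr⟩, r', hr'⟩
    · exact Or.inl ⟨hnbr hq, r, hr.trans hp⟩
    · exact Or.inr (Set.mem_biUnion ⟨hJ w w' hww', r, hr.trans hp⟩
        (Set.mem_biUnion hww' ⟨hq, r', by omega⟩))

section SumGraph

variable {W : Type*} {D : SimpleGraph (V ⊕ W)}

theorem Walk.exists_adj_inl_of_start_inr (hD : ∀ c c', ¬ D.Adj (.inr c) (.inr c')) {c : W}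
    {z : V ⊕ W} (p : D.Walk (.inr c) z) (hz : z ≠ .inr c) :
    ∃ x, D.Adj (.inr c) (.inl x) ∧ ∃ q : D.Walk (.inl x) z, q.length + 1 = p.length := by
  cases p with
  | nil => exact absurd rfl hz
  | cons h q =>
    rename_i y
    cases y with
    | inl x => exact ⟨x, h, q, length_cons _ _ ▸ rfl⟩
    | inr c' => exact absurd h (hD c c')

theorem Walk.exists_walk_length_le_mul_of_inl {R : SimpleGraph V} {L : ℕ}
    (hD : ∀ c c', ¬ D.Adj (.inr c) (.inr c'))
    (hstep : ∀ x y, D.Adj (.inl x) (.inl y) → ∃ q : R.Walk x y, q.length ≤ L)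
    (hpass : ∀ x c y, D.Adj (.inl x) (.inr c) → D.Adj (.inr c) (.inl y) →
      ∃ q : R.Walk x y, q.length ≤ 2 * L) {x y : V} (p : D.Walk (.inl x) (.inl y)) :
    ∃ q : R.Walk x y, q.length ≤ L * p.length := by
  induction hn : p.length using Nat.strong_induction_on generalizing x with
  | _ n ih =>
  cases p with
  | nil => exact ⟨nil, by simp⟩
  | cons h p =>
    rename_i z
    rw [length_cons] at hn
    cases z with
    | inl z =>
      obtain ⟨q₁, hq₁⟩ := hstep x z h
      obtain ⟨q₂, hq₂⟩ := ih p.length (by omega) p rfl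
      exact ⟨q₁.append q₂, by rw [length_append, ← hn]; nlinarith⟩
    | inr c =>
      obtain ⟨z, hz, p', hp'⟩ := p.exists_adj_inl_of_start_inr hD Sum.inl_ne_inr
      obtain ⟨q₁, hq₁⟩ := hpass x c z h hz
      obtain ⟨q₂, hq₂⟩ := ih p'.length (by omega) p' rfl
      exact ⟨q₁.append q₂, by rw [length_append, ← hn, ← hp']; nlinarith⟩

end SumGraph

end SimpleGraph

def IsGraphAction.toHom {G : Type u} [Group G] {V : Type v} [MulAction G V] {Γ : SimpleGraph V}
    (hact : IsGraphAction G Γ) (g : G) : Γ →g Γ :=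
  ⟨(g • ·), hact g _ _⟩

@[simp]
theorem IsGraphAction.toHom_apply {G : Type u} [Group G] {V : Type v} [MulAction G V]
    {Γ : SimpleGraph V} (hact : IsGraphAction G Γ) (g : G) (x : V) : hact.toHom g x = g • x :=
  rfl

section Shortcuts

variable {G : Type u} [Group G] {V : Type v} [MulAction G V] {Γ : SimpleGraph V}

/-- The edges needed to reroute around `a` a translate of a walk inside `K`. -/
def shortcutGraph (G : Type u) [Group G] [MulAction G V] (Γ : SimpleGraph V) (K : Set V)
    (a : V) : SimpleGraph V :=
  SimpleGraph.fromRel fun w₁ w₂ =>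
    Γ.Adj w₁ a ∧ Γ.Adj w₂ a ∧ ∃ g : G, a ∈ g • K ∧ w₁ ∈ g • K ∧ w₂ ∈ g • K

theorem adj_of_shortcutGraph_adj {K : Set V} {a w₁ w₂ : V}
    (h : (shortcutGraph G Γ K a).Adj w₁ w₂) : Γ.Adj a w₁ := by
  rcases h.2 with ⟨h₁, -⟩ | ⟨-, h₁, -⟩ <;> exact h₁.symm

theorem finite_neighborSet_shortcutGraph [TopologicalSpace G] [IsTopologicalGroup G]
    (hdisc : IsDiscreteAction G Γ) (hedge : HasCompactEdgeStabilizers G Γ) {K : Set V}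
    (hK : K.Finite) (a w : V) : ((shortcutGraph G Γ K a).neighborSet w).Finite := by
  by_cases hw : Γ.Adj w a
  · refine (hK.biUnion fun k _ =>
      (isCompact_setOf_mem_smul_and_mem_smul hedge hK hw).finite_image_smul (hdisc k)).subset ?_
    rintro w₂ ⟨-, ⟨-, -, g, ha, hw₁, hw₂⟩ | ⟨-, -, g, ha, hw₂, hw₁⟩⟩ <;>
    · obtain ⟨k, hk, rfl⟩ := hw₂
      exact Set.mem_biUnion hk ⟨g, ⟨hw₁, ha⟩, rfl⟩
  · exact Set.finite_empty.subset fun w₂ h => hw (adj_of_shortcutGraph_adj h).symm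

end Shortcuts

namespace attachConeEdges

variable {G : Type u} [Group G] {V : Type v} [MulAction G V] {Γ : SimpleGraph V} {u : V}
  {H : Subgroup G} {K : Set V} {M : ℕ}

@[simp]
theorem adj_inl_inl {x y : V} : (attachConeEdges G Γ u H).Adj (.inl x) (.inl y) ↔ Γ.Adj x y := by
  simp [attachConeEdges]

@[simp]
theorem adj_inl_inr {x : V} {c : G ⧸ H} :
    (attachConeEdges G Γ u H).Adj (.inl x) (.inr c) ↔ ∃ g : G, g • u = x ∧ (g : G ⧸ H) = c := by
  simp [attachConeEdges, eq_comm]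

@[simp]
theorem not_adj_inr_inr {c c' : G ⧸ H} : ¬ (attachConeEdges G Γ u H).Adj (.inr c) (.inr c') := by
  simp [attachConeEdges]

theorem not_adj_deleteVertex_inr_inr (a : V ⊕ G ⧸ H) (c c' : G ⧸ H) :
    ¬ ((attachConeEdges G Γ u H).deleteVertex a).Adj (.inr c) (.inr c') :=
  fun h => not_adj_inr_inr h.1

def inlHom : Γ →g attachConeEdges G Γ u H := ⟨Sum.inl, adj_inl_inl.2⟩

@[simp]
theorem inlHom_apply (x : V) : (inlHom : Γ →g attachConeEdges G Γ u H) x = .inl x :=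
  rfl

theorem exists_walk_of_adj_inr (hact : IsGraphAction G Γ)
    (hwalk : ∀ h ∈ H, ∃ p : Γ.Walk u (h • u), p.length ≤ M ∧ ∀ v ∈ p.support, v ∈ K)
    {x y : V} {c : G ⧸ H} (hx : (attachConeEdges G Γ u H).Adj (.inl x) (.inr c))
    (hy : (attachConeEdges G Γ u H).Adj (.inr c) (.inl y)) :
    ∃ g : G, (g : G ⧸ H) = c ∧ ∃ q : Γ.Walk x y, q.length ≤ M ∧ ∀ v ∈ q.support, v ∈ g • K := by
  obtain ⟨g, rfl, rfl⟩ := adj_inl_inr.1 hx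
  obtain ⟨g', rfl, hg'⟩ := adj_inl_inr.1 hy.symm
  obtain ⟨p, hp, hpK⟩ := hwalk (g⁻¹ * g') (QuotientGroup.eq.1 hg'.symm)
  refine ⟨g, rfl, (p.map (hact.toHom g)).copy (hact.toHom_apply g u) (by simp [mul_smul]),
    by rwa [Walk.length_copy, Walk.length_map], ?_⟩
  intro v hv
  simp only [Walk.support_copy, Walk.support_map, List.mem_map] at hv
  obtain ⟨v, hv, rfl⟩ := hv
  exact Set.smul_mem_smul_set (hpK v hv)

theorem exists_walk_of_walk_deleteVertex (hact : IsGraphAction G Γ)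
    (hwalk : ∀ h ∈ H, ∃ p : Γ.Walk u (h • u), p.length ≤ M ∧ ∀ v ∈ p.support, v ∈ K)
    {a x y : V} (p : ((attachConeEdges G Γ u H).deleteVertex (.inl a)).Walk (.inl x) (.inl y)) :
    ∃ q : ((Γ ⊔ shortcutGraph G Γ K a).deleteVertex a).Walk x y,
      q.length ≤ (M + 1) * p.length := by
  refine p.exists_walk_length_le_mul_of_inl (not_adj_deleteVertex_inr_inr _)
    (fun x y h => ?_) (fun x c y hx hy => ?_)
  · simp only [deleteVertex_adj, adj_inl_inl, ne_eq, Sum.inl.injEq] at h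
    exact ⟨(deleteVertex_adj.2 ⟨Or.inl h.1, h.2⟩).toWalk, by simp⟩
  · obtain ⟨g, -, q, hq, hqK⟩ := exists_walk_of_adj_inr hact hwalk hx.1 hy.1
    have hxa : x ≠ a := fun h => hx.2.1 (congrArg _ h)
    have hya : y ≠ a := fun h => hy.2.2 (congrArg _ h)
    obtain ⟨q', hq'⟩ := q.exists_walk_sup_deleteVertex (J := shortcutGraph G Γ K a) hxa hya
      fun ha w₁ hw₁ w₂ hw₂ h₁ h₂ hne => (fromRel_adj _ _ _).2
        ⟨hne, Or.inl ⟨h₁, h₂, g, hqK a ha, hqK w₁ hw₁, hqK w₂ hw₂⟩⟩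
    exact ⟨q', by omega⟩

theorem angleBall_inr_subset (a : V) (c : G ⧸ H) (n : ℕ) :
    (attachConeEdges G Γ u H).angleBall (.inl a) (.inr c) n ⊆ {.inr c} ∪
      ⋃ x ∈ {x | (attachConeEdges G Γ u H).Adj (.inr c) (.inl x)},
        (attachConeEdges G Γ u H).angleBall (.inl a) (.inl x) n := by
  rintro z ⟨hz, p, hp⟩
  by_cases hzc : z = .inr c
  · exact Or.inl hzc
  obtain ⟨x, hx, q, hq⟩ := p.exists_adj_inl_of_start_inr (not_adj_deleteVertex_inr_inr _) hzc
  exact Or.inr (Set.mem_biUnion hx.1 ⟨hz, q, by omega⟩)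

theorem dist_inl_le {x y : V} (hxy : Γ.Reachable x y) :
    (attachConeEdges G Γ u H).dist (.inl x) (.inl y) ≤ Γ.dist x y := by
  obtain ⟨p, hp⟩ := hxy.exists_walk_length_eq_dist
  have := dist_le (p.map (inlHom (G := G) (u := u) (H := H)))
  rwa [Walk.length_map, hp, inlHom_apply, inlHom_apply] at this

theorem dist_le_mul_dist_inl (hact : IsGraphAction G Γ)
    (hwalk : ∀ h ∈ H, ∃ p : Γ.Walk u (h • u), p.length ≤ M ∧ ∀ v ∈ p.support, v ∈ K) {x y : V}
    (hxy : Γ.Reachable x y) :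
    Γ.dist x y ≤ (M + 1) * (attachConeEdges G Γ u H).dist (.inl x) (.inl y) := by
  obtain ⟨p, hp⟩ := (hxy.map (inlHom (G := G) (u := u) (H := H))).exists_walk_length_eq_dist
  obtain ⟨q, hq⟩ := p.exists_walk_length_le_mul_of_inl (R := Γ) (L := M + 1)
    (fun _ _ => not_adj_inr_inr) (fun x y h => ⟨(adj_inl_inl.1 h).toWalk, by simp⟩)
    (fun x c y hx hy => by
      obtain ⟨g, -, q, hq, -⟩ := exists_walk_of_adj_inr hact hwalk hx hy
      exact ⟨q, by omega⟩)
  exact (dist_le q).trans (hp ▸ hq)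

theorem exists_dist_inl_le_one (z : V ⊕ G ⧸ H) :
    ∃ x : V, (attachConeEdges G Γ u H).dist z (.inl x) ≤ 1 := by
  rcases z with x | c
  · exact ⟨x, by simp⟩
  obtain ⟨g, rfl⟩ := QuotientGroup.mk_surjective c
  exact ⟨g • u, (dist_eq_one_iff_adj.2 (adj_inl_inr.2 ⟨g, rfl, rfl⟩).symm).le⟩

section Topology

variable [TopologicalSpace G] [IsTopologicalGroup G]

theorem finite_neighborSet_inr (hstab : IsOpen (stabilizer G u : Set G))
    (hH : IsCompact (H : Set G)) (c : G ⧸ H) :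
    {x | (attachConeEdges G Γ u H).Adj (.inr c) (.inl x)}.Finite := by
  obtain ⟨g, rfl⟩ := QuotientGroup.mk_surjective c
  refine ((hH.smul g).finite_image_smul hstab).subset ?_
  rintro x hx
  obtain ⟨g', rfl, hg'⟩ := adj_inl_inr.1 hx.symm
  exact ⟨g', by simpa [Set.mem_smul_set_iff_inv_smul_mem, QuotientGroup.eq] using hg'.symm, rfl⟩

theorem angleBall_inl_finite (hact : IsGraphAction G Γ) (hdisc : IsDiscreteAction G Γ)
    (hedge : HasCompactEdgeStabilizers G Γ) (hHopen : IsOpen (H : Set G)) (hK : K.Finite)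
    (hwalk : ∀ h ∈ H, ∃ p : Γ.Walk u (h • u), p.length ≤ M ∧ ∀ v ∈ p.support, v ∈ K) {a : V}
    (hfine : Γ.FineAt a) (s : V) (n : ℕ) :
    ((attachConeEdges G Γ u H).angleBall (.inl a) (.inl s) n).Finite := by
  have hball := hfine.angleBall_sup_finite (fun _ _ => adj_of_shortcutGraph_adj)
    (finite_neighborSet_shortcutGraph hdisc hedge hK a)
  have hnbr : ∀ {w}, (Γ ⊔ shortcutGraph G Γ K a).Adj a w → Γ.Adj w a :=
    fun h => (h.resolve_right fun h' => (adj_of_shortcutGraph_adj h').ne rfl).symm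
  refine Set.finite_preimage_inl_and_inr.1 ⟨(hball s ((M + 1) * n)).subset ?_,
    ((hball s ((M + 1) * n + M)).biUnion fun w hw => (isCompact_setOf_mem_smul_and_mem_smul
      hedge hK (hnbr hw.1)).finite_image_mk hHopen).subset ?_⟩
  · rintro q ⟨hq, p, hp⟩
    obtain ⟨r, hr⟩ := exists_walk_of_walk_deleteVertex hact hwalk p
    exact ⟨Or.inl (adj_inl_inl.1 hq), r, hr.trans (Nat.mul_le_mul_left _ hp)⟩
  · rintro c ⟨hc, p, hp⟩
    obtain ⟨x, hx, p', hp'⟩ :=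
      p.reverse.exists_adj_inl_of_start_inr (not_adj_deleteVertex_inr_inr _) Sum.inl_ne_inr
    have hxa : x ≠ a := fun h => hx.2.2 (congrArg _ h)
    obtain ⟨r, hr⟩ := exists_walk_of_walk_deleteVertex hact hwalk p'.reverse
    obtain ⟨g, rfl, Q, hQ, hQK⟩ := exists_walk_of_adj_inr hact hwalk hx.1.symm hc.symm
    obtain ⟨w, hw, hwa, q, hq⟩ := Q.exists_adj_of_mem_support hxa Q.end_mem_support
    refine Set.mem_biUnion (x := w) ⟨Or.inl hwa.symm,
      r.append (q.mapLe (deleteVertex_mono le_sup_left a)), ?_⟩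
      ⟨g, ⟨hQK w hw, hQK a Q.end_mem_support⟩, rfl⟩
    rw [Walk.length_reverse] at hp' hr
    have := Nat.mul_le_mul_left (M + 1) (show p'.length ≤ n by omega)
    rw [Walk.length_append, Walk.length_mapLe]
    omega

theorem fineAt_inl (hact : IsGraphAction G Γ) (hdisc : IsDiscreteAction G Γ)
    (hedge : HasCompactEdgeStabilizers G Γ) (hHcompact : IsCompact (H : Set G))
    (hHopen : IsOpen (H : Set G)) (hK : K.Finite)
    (hwalk : ∀ h ∈ H, ∃ p : Γ.Walk u (h • u), p.length ≤ M ∧ ∀ v ∈ p.support, v ∈ K) {a : V}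
    (hfine : Γ.FineAt a) : (attachConeEdges G Γ u H).FineAt (.inl a) := by
  have hinl := angleBall_inl_finite hact hdisc hedge hHopen hK hwalk hfine
  rintro (s | c) - n
  · exact hinl s n
  · exact ((Set.finite_singleton _).union ((finite_neighborSet_inr (hdisc u) hHcompact c).biUnion
      fun x _ => hinl x n)).subset (angleBall_inr_subset a c n)

end Topology

end attachConeEdges

theorem fineAt_attachConeEdges_iff_general
    {G : Type u} [Group G] [TopologicalSpace G] [IsTopologicalGroup G]
    {V : Type v} [MulAction G V] (Γ : SimpleGraph V)
    (hact : IsGraphAction G Γ) (hconn : Γ.Connected)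
    (hdisc : IsDiscreteAction G Γ)
    (hedge : HasCompactEdgeStabilizers G Γ)
    (u : V) (H : Subgroup G)
    (hHcompact : IsCompact (H : Set G)) (hHopen : IsOpen (H : Set G)) :
    (∀ a : V, Γ.FineAt a ↔ (attachConeEdges G Γ u H).FineAt (Sum.inl a)) ∧
    (∃ ℓ : ℕ, 1 ≤ ℓ ∧ ∀ x y : V,
      (attachConeEdges G Γ u H).dist (Sum.inl x) (Sum.inl y) ≤ Γ.dist x y ∧
      Γ.dist x y ≤ ℓ * (attachConeEdges G Γ u H).dist (Sum.inl x) (Sum.inl y)) ∧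
    (∀ z : V ⊕ (G ⧸ H), ∃ x : V, (attachConeEdges G Γ u H).dist z (Sum.inl x) ≤ 1) := by
  obtain ⟨M, K, hK, hwalk⟩ :=
    hconn.exists_walks_bounded u (hHcompact.finite_image_smul (hdisc u))
  have hwalkH : ∀ h ∈ H, ∃ p : Γ.Walk u (h • u), p.length ≤ M ∧ ∀ v ∈ p.support, v ∈ K :=
    fun h hh => hwalk _ ⟨h, hh, rfl⟩
  refine ⟨fun a => ⟨attachConeEdges.fineAt_inl hact hdisc hedge hHcompact hHopen hK hwalkH,
      attachConeEdges.inlHom.fineAt_of_injective Sum.inl_injective⟩,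
    ⟨M + 1, by omega, fun x y => ⟨attachConeEdges.dist_inl_le (hconn.preconnected x y),
      attachConeEdges.dist_le_mul_dist_inl hact hwalkH (hconn.preconnected x y)⟩⟩,
    attachConeEdges.exists_dist_inl_le_one⟩

/-- Attaching a `G`-orbit of cone edges `{g•u, gH}`, for `H` a compact open subgroup, to a
connected discrete `G`-graph with compact pointwise edge stabilizers preserves fineness at
every old vertex, and the inclusion is a quasi-isometry onto a 1-dense subset. -/
theorem fineAt_attachConeEdges_iff
    {G : Type u} [Group G] [TopologicalSpace G] [IsTopologicalGroup G] [T2Space G]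
    {V : Type v} [MulAction G V] (Γ : SimpleGraph V)
    (hact : IsGraphAction G Γ) (hconn : Γ.Connected)
    (hdisc : IsDiscreteAction G Γ)
    (hedge : HasCompactEdgeStabilizers G Γ)
    (u : V) (H : Subgroup G)
    (hHcompact : IsCompact (H : Set G)) (hHopen : IsOpen (H : Set G)) :
    (∀ a : V, Γ.FineAt a ↔ (attachConeEdges G Γ u H).FineAt (Sum.inl a)) ∧
    (∃ ℓ : ℕ, 1 ≤ ℓ ∧ ∀ x y : V,
      (attachConeEdges G Γ u H).dist (Sum.inl x) (Sum.inl y) ≤ Γ.dist x y ∧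
      Γ.dist x y ≤ ℓ * (attachConeEdges G Γ u H).dist (Sum.inl x) (Sum.inl y)) ∧
    (∀ z : V ⊕ (G ⧸ H), ∃ x : V, (attachConeEdges G Γ u H).dist z (Sum.inl x) ≤ 1) :=
  fineAt_attachConeEdges_iff_general Γ hact hconn hdisc hedge u H hHcompact hHopen
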